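/- arXiv:1404.1169 — 3 statements merged into one kernel-verified Lean document; each statement's English description precedes it below -/
import Mathlib

section
/- On the quaternionic span of X the form g_α is B(X,X) times B: for all v, w in the linear span of {X, IX, JX, KX}, g_α(v, w) = B(X, X) · B(v, w). -/
theorem g_alpha_on_quaternionic_span
    {V : Type*} [AddCommGroup V] [Module ℝ V]
    (B : LinearMap.BilinForm ℝ V)
    (hBsymm : ∀ v w : V, B v w = B w v)
    (I J : V →ₗ[ℝ] V)
    (hI : ∀ v : V, I (I v) = -v)
    (hJ : ∀ v : V, J (J v) = -v)
    (hIJ : ∀ v : V, I (J v) = -J (I v))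
    (hBI : ∀ v w : V, B (I v) (I w) = B v w)
    (hBJ : ∀ v w : V, B (J v) (J w) = B v w)
    (K : V →ₗ[ℝ] V) (hK : K = I ∘ₗ J)
    (X : V)
    (gα : V → V → ℝ)
    (hgα : ∀ v w : V, gα v w =
      B X v * B X w + B (I X) v * B (I X) w + B (J X) v * B (J X) w +
        B (K X) v * B (K X) w) :
    ∀ v ∈ Submodule.span ℝ ({X, I X, J X, K X} : Set V),
      ∀ w ∈ Submodule.span ℝ ({X, I X, J X, K X} : Set V),
        gα v w = B X X * B v w := by
  have hKX : K X = I (J X) := by rw [hK]; rfl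
  set c := B X X with hc
  -- Gram matrix computations
  have h1 : B X X = c := rfl
  have h2 : B (I X) (I X) = c := hBI X X
  have h3 : B (J X) (J X) = c := hBJ X X
  have h4 : B (K X) (K X) = c := by rw [hKX, hBI, hBJ]
  have h5 : B X (I X) = 0 := by
    have h := hBI X (I X)
    rw [hI, map_neg, hBsymm X (I X)] at h
    rw [hBsymm X (I X)]
    linarith
  have h6 : B X (J X) = 0 := by
    have h := hBJ X (J X)
    rw [hJ, map_neg, hBsymm X (J X)] at h
    rw [hBsymm X (J X)]
    linarith
  have h8' : B (I X) (J X) = B X (K X) := by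
    have hji : J (I X) = -(K X) := by rw [hKX, hIJ X, neg_neg]
    have h := hBJ (I X) (J X)
    rw [hJ, hji] at h
    have h2' : B (-(K X)) (-X) = B X (K X) := by
      simp [hBsymm (K X) X]
    rw [h2'] at h
    linarith
  have h7 : B X (K X) = 0 := by
    have h := hBI X (K X)
    have hik : I (K X) = -(J X) := by rw [hKX, hI]
    rw [hik, map_neg] at h
    have := h8'
    linarith
  have h8 : B (I X) (J X) = 0 := by rw [h8', h7]
  have h9 : B (I X) (K X) = 0 := by
    have h := hBI X (J X)
    rw [← hKX] at h
    rw [h, h6]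
  have h10 : B (J X) (K X) = 0 := by
    have hjij : J (I (J X)) = I X := by
      have h' := hIJ (J X)
      rw [hJ, map_neg] at h'
      exact (neg_inj.mp h').symm
    have h := hBJ (J X) (I (J X))
    rw [hJ, hjij] at h
    have h2' : B (-X) (I X) = -(B X (I X)) := by
      simp
    rw [h2', h5, ← hKX] at h
    linarith
  -- symmetric versions
  have h5s : B (I X) X = 0 := by rw [hBsymm]; exact h5
  have h6s : B (J X) X = 0 := by rw [hBsymm]; exact h6
  have h7s : B (K X) X = 0 := by rw [hBsymm]; exact h7
  have h8s : B (J X) (I X) = 0 := by rw [hBsymm]; exact h8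
  have h9s : B (K X) (I X) = 0 := by rw [hBsymm]; exact h9
  have h10s : B (K X) (J X) = 0 := by rw [hBsymm]; exact h10
  have key : ∀ e ∈ ({X, I X, J X, K X} : Set V), ∀ f ∈ ({X, I X, J X, K X} : Set V),
      gα e f = c * B e f := by
    intro e he f hf
    simp only [Set.mem_insert_iff, Set.mem_singleton_iff] at he hf
    rw [hgα]
    rcases he with rfl | rfl | rfl | rfl <;> rcases hf with rfl | rfl | rfl | rfl <;>
      simp only [h1, h2, h3, h4, h5, h6, h7, h8, h9, h10, h5s, h6s, h7s, h8s, h9s, h10s] <;>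
      ring
  -- bilinearity of gα
  have gzl : ∀ w, gα 0 w = 0 := by intro w; simp [hgα]
  have gzr : ∀ v, gα v 0 = 0 := by intro v; simp [hgα]
  have gal : ∀ a b w, gα (a + b) w = gα a w + gα b w := by
    intro a b w; simp only [hgα, map_add]; ring
  have gar : ∀ v a b, gα v (a + b) = gα v a + gα v b := by
    intro v a b; simp only [hgα, map_add]; ring
  have gsl : ∀ (r : ℝ) a w, gα (r • a) w = r * gα a w := by
    intro r a w; simp only [hgα, map_smul, smul_eq_mul]; ring
  have gsr : ∀ (r : ℝ) v a, gα v (r • a) = r * gα v a := by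
    intro r v a; simp only [hgα, map_smul, smul_eq_mul]; ring
  have main1 : ∀ e ∈ ({X, I X, J X, K X} : Set V),
      ∀ w ∈ Submodule.span ℝ ({X, I X, J X, K X} : Set V), gα e w = c * B e w := by
    intro e he w hw
    induction hw using Submodule.span_induction with
    | mem y hy => exact key e he y hy
    | zero => simp [gzr]
    | add a b ha hb iha ihb => rw [gar, iha, ihb, map_add]; ring
    | smul r a ha iha => rw [gsr, iha, map_smul]; simp; ring
  intro v hv w hw
  induction hv using Submodule.span_induction with
  | mem x hx => exact main1 x hx w hw
  | zero => simp [gzl]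
  | add a b ha hb iha ihb =>
      rw [gal, iha, ihb, map_add, LinearMap.add_apply]; ring
  | smul r a ha iha =>
      rw [gsl, iha, map_smul, LinearMap.smul_apply]; simp; ring
end

section
/- On the quaternionic span of X, the elementary deformation g^N(v,w) = g_α(v,w)/(m−c)² − B(v,w)/(m−c) is the multiple ((B(X,X) − m + c)/(m−c)²) of B: for all v, w in the linear span of {X, IX, JX, KX}, g_α(v,w)/(m−c)² − B(v,w)/(m−c) = ((B(X,X) − m + c)/(m−c)²) · B(v,w). Moreover, if v satisfies B(X,v) = B(IX,v) = B(JX,v) = B(KX,v) = 0, then g_α(v,w) = 0 for all w, so g^N(v,v) = −B(v,v)/(m−c). -/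
theorem elementary_deformation_on_quaternionic_span
    {V : Type*} [AddCommGroup V] [Module ℝ V]
    (B : LinearMap.BilinForm ℝ V)
    (hBsymm : ∀ v w : V, B v w = B w v)
    (I J : V →ₗ[ℝ] V)
    (hI : ∀ v : V, I (I v) = -v)
    (hJ : ∀ v : V, J (J v) = -v)
    (hIJ : ∀ v : V, I (J v) = -J (I v))
    (hBI : ∀ v w : V, B (I v) (I w) = B v w)
    (hBJ : ∀ v w : V, B (J v) (J w) = B v w)
    (K : V →ₗ[ℝ] V) (hK : K = I ∘ₗ J)
    (X : V)
    (gα : V → V → ℝ)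
    (hgα : ∀ v w : V, gα v w =
      B X v * B X w + B (I X) v * B (I X) w + B (J X) v * B (J X) w +
        B (K X) v * B (K X) w)
    (m c : ℝ) (hmc : m ≠ c) :
    (∀ v ∈ Submodule.span ℝ ({X, I X, J X, K X} : Set V),
      ∀ w ∈ Submodule.span ℝ ({X, I X, J X, K X} : Set V),
        gα v w / (m - c) ^ 2 - B v w / (m - c) =
          ((B X X - m + c) / (m - c) ^ 2) * B v w) ∧
    (∀ v : V, B X v = 0 → B (I X) v = 0 → B (J X) v = 0 → B (K X) v = 0 →
      (∀ w : V, gα v w = 0) ∧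
        gα v v / (m - c) ^ 2 - B v v / (m - c) = -(B v v) / (m - c)) := by
  have hKX : K X = I (J X) := by rw [hK]; rfl
  have hJI : J (I X) = -(I (J X)) := by rw [hIJ X, neg_neg]
  have hne : m - c ≠ 0 := sub_ne_zero.mpr hmc
  -- Gram matrix facts
  have hII : B (I X) (I X) = B X X := hBI X X
  have hJJ : B (J X) (J X) = B X X := hBJ X X
  have hKK : B (K X) (K X) = B X X := by rw [hKX, hBI, hBJ]
  have o1 : B X (I X) = 0 := by
    have h := hBI X (I X)
    rw [hI X, map_neg] at h
    have h2 := hBsymm X (I X)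
    linarith
  have o2 : B X (J X) = 0 := by
    have h := hBJ X (J X)
    rw [hJ X, map_neg] at h
    have h2 := hBsymm X (J X)
    linarith
  have h34a : B X (K X) = B (I X) (J X) := by
    have h := hBJ (I X) (J X)
    rw [hJ X, hJI, map_neg, map_neg, LinearMap.neg_apply, neg_neg, ← hKX] at h
    rw [← h, hBsymm]
  have h34b : -(B (I X) (J X)) = B X (K X) := by
    have h := hBI X (K X)
    rw [hKX, hI (J X), map_neg, ← hKX] at h
    rw [hKX] at h ⊢
    exact h
  have o3 : B X (K X) = 0 := by linarith
  have o4 : B (I X) (J X) = 0 := by linarith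
  have o5 : B (I X) (K X) = 0 := by rw [hKX, hBI]; exact o2
  have o6 : B (J X) (K X) = 0 := by
    rw [hKX, hIJ X, map_neg, hBJ]
    simp [o1]
  -- symmetric versions
  have o1' : B (I X) X = 0 := by rw [hBsymm]; exact o1
  have o2' : B (J X) X = 0 := by rw [hBsymm]; exact o2
  have o3' : B (K X) X = 0 := by rw [hBsymm]; exact o3
  have o4' : B (J X) (I X) = 0 := by rw [hBsymm]; exact o4
  have o5' : B (K X) (I X) = 0 := by rw [hBsymm]; exact o5
  have o6' : B (K X) (J X) = 0 := by rw [hBsymm]; exact o6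
  -- key lemma : on the span, gα v w = ‖X‖² B v w for ALL w
  have key : ∀ v ∈ Submodule.span ℝ ({X, I X, J X, K X} : Set V),
      ∀ w : V, gα v w = B X X * B v w := by
    intro v hv
    induction hv using Submodule.span_induction with
    | mem x hx =>
      rcases hx with rfl | rfl | rfl | rfl
      · intro w; rw [hgα, o1', o2', o3']; ring
      · intro w; rw [hgα, o1, o4', o5', hII]; ring
      · intro w; rw [hgα, o2, o4, o6', hJJ]; ring
      · intro w; rw [hgα, o3, o5, o6, hKK]; ring
    | zero => intro w; rw [hgα]; simp
    | add x y hx hy ihx ihy =>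
      intro w
      have h1 := ihx w
      have h2 := ihy w
      rw [hgα] at h1 h2 ⊢
      simp only [map_add, LinearMap.add_apply]
      linear_combination h1 + h2
    | smul r x hx ih =>
      intro w
      have h1 := ih w
      rw [hgα] at h1 ⊢
      simp only [map_smul, LinearMap.smul_apply, smul_eq_mul]
      linear_combination r * h1
  constructor
  · intro v hv w hw
    rw [key v hv w]
    field_simp
    ring
  · intro v h1 h2 h3 h4
    have hzero : ∀ w : V, gα v w = 0 := by
      intro w
      have hs1 : B v X = 0 := by rw [hBsymm]; exact h1
      have hs2 : B v (I X) = 0 := by rw [hBsymm]; exact h2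
      have hs3 : B v (J X) = 0 := by rw [hBsymm]; exact h3
      have hs4 : B v (K X) = 0 := by rw [hBsymm]; exact h4
      rw [hgα, h1, h2, h3, h4]; ring
    refine ⟨hzero, ?_⟩
    rw [hzero v, zero_div, zero_sub, neg_div]
end

section
/- The Hamiltonian condition for the twist function in the flat example: the function f : V → ℝ, f(p) = β(p, A p), is differentiable, and for every p ∈ V the Fréchet derivative of f at p is the linear functional w ↦ −G(A p, w). -/
open Finset

/-- The underlying space of the flat hyperKähler manifold `ℍ^{p,q}`:
each point has components `w i = (wx i, wy i, wu i, wv i)`. -/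
abbrev HV (n : ℕ) := Fin n → ℝ × ℝ × ℝ × ℝ

variable {n : ℕ}

/-- The flat (pseudo-)Riemannian metric `g`. -/
def gF (ε : Fin n → ℝ) (v w : HV n) : ℝ :=
  ∑ i, ε i * ((v i).1 * (w i).1 + (v i).2.1 * (w i).2.1 +
    (v i).2.2.1 * (w i).2.2.1 + (v i).2.2.2 * (w i).2.2.2)

/-- The Kähler two-form `ω_I`. -/
def omegaI (ε : Fin n → ℝ) (v w : HV n) : ℝ :=
  ∑ i, ε i * ((v i).1 * (w i).2.1 - (v i).2.1 * (w i).1 -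
    (v i).2.2.1 * (w i).2.2.2 + (v i).2.2.2 * (w i).2.2.1)

/-- The Kähler two-form `ω_J`. -/
def omegaJ (ε : Fin n → ℝ) (v w : HV n) : ℝ :=
  ∑ i, ε i * ((v i).2.2.1 * (w i).1 - (v i).1 * (w i).2.2.1 +
    (v i).2.2.2 * (w i).2.1 - (v i).2.1 * (w i).2.2.2)

/-- The Kähler two-form `ω_K`. -/
def omegaK (ε : Fin n → ℝ) (v w : HV n) : ℝ :=
  ∑ i, ε i * ((v i).2.2.1 * (w i).2.1 - (v i).2.1 * (w i).2.2.1 -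
    (v i).2.2.2 * (w i).1 + (v i).1 * (w i).2.2.2)

/-- The complex structure `I`: `(I w) i = (−wy i, wx i, wv i, −wu i)`. -/
def Imap (w : HV n) : HV n := fun i =>
  (-(w i).2.1, (w i).1, (w i).2.2.2, -(w i).2.2.1)

/-- The complex structure `J`: `(J w) i = (wu i, wv i, −wx i, −wy i)`. -/
def Jmap (w : HV n) : HV n := fun i =>
  ((w i).2.2.1, (w i).2.2.2, -(w i).1, -(w i).2.1)

/-- The complex structure `K`: `(K w) i = (−wv i, wu i, −wy i, wx i)`. -/
def Kmap (w : HV n) : HV n := fun i =>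
  (-(w i).2.2.2, (w i).2.2.1, -(w i).2.1, (w i).1)

/-- The linear map `A` generating the rotating symmetry `X(p) = A p`. -/
noncomputable def Amap (lam : Fin n → ℝ) (w : HV n) : HV n := fun i =>
  ((1 / 2 - lam i) * (w i).2.1, -(1 / 2 - lam i) * (w i).1,
    -(1 / 2 + lam i) * (w i).2.2.2, (1 / 2 + lam i) * (w i).2.2.1)

/-- The two-form `G` with `dα₀ = G − ω_I`. -/
def Gform (ε lam : Fin n → ℝ) (v w : HV n) : ℝ :=
  2 * ∑ i, ε i * lam i * ((v i).1 * (w i).2.1 - (v i).2.1 * (w i).1 +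
    (v i).2.2.1 * (w i).2.2.2 - (v i).2.2.2 * (w i).2.2.1)

/-- The one-form (primitive of `G`) `β`. -/
def betaForm (ε lam : Fin n → ℝ) (p w : HV n) : ℝ :=
  ∑ i, ε i * lam i * (-(p i).2.1 * (w i).1 + (p i).1 * (w i).2.1 -
    (p i).2.2.2 * (w i).2.2.1 + (p i).2.2.1 * (w i).2.2.2)

/-- The Kähler moment map `μ`. -/
noncomputable def muMap (ε lam : Fin n → ℝ) (p : HV n) : ℝ :=
  (1 / 2) * ∑ i, ε i * ((1 / 2 - lam i) * ((p i).1 ^ 2 + (p i).2.1 ^ 2) +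
    (1 / 2 + lam i) * ((p i).2.2.1 ^ 2 + (p i).2.2.2 ^ 2))

/-! The vector field `X(p) = A p` is infinitesimally symplectic for the skew form `β = G / 2`. For
such a field `p ↦ β(p, A p)` is a quadratic Hamiltonian: by bilinearity its derivative at `p` is
`w ↦ β(w, A p) + β(p, A w)`, and skewness of `β` and of `A` turn both terms into `-β(A p, w)`,
giving `-2 β(A p, ·) = -G(A p, ·)`. -/

namespace ContinuousLinearMap

variable {𝕜 E F : Type*} [NontriviallyNormedField 𝕜] [NormedAddCommGroup E] [NormedSpace 𝕜 E]
  [NormedAddCommGroup F] [NormedSpace 𝕜 F]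

theorem hasFDerivAt_apply_self_of_skew (ω : E →L[𝕜] E →L[𝕜] F) (T : E →L[𝕜] E)
    (hω : ∀ v w, ω v w = -ω w v) (hT : ∀ v w, ω (T v) w + ω v (T w) = 0) (p : E) :
    HasFDerivAt (fun q => ω q (T q)) (-(2 : 𝕜) • ω (T p)) p := by
  refine (ω.hasFDerivAt_of_bilinear (hasFDerivAt_id p) T.hasFDerivAt).congr_fderiv ?_
  ext w
  have hleft : ω w (T p) = -ω (T p) w := hω w (T p)
  have hright : ω p (T w) = -ω (T p) w := eq_neg_of_add_eq_zero_right (hT p w)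
  simp only [add_apply, precompR_apply, precompL_apply, compL_apply, comp_apply, id_eq, id_apply,
    smul_apply, hleft, hright]
  module

end ContinuousLinearMap

section FlatExample

variable (ε lam : Fin n → ℝ)

theorem isLinearMap_Amap : IsLinearMap ℝ (Amap (n := n) lam) := by
  constructor <;> intros <;> ext <;>
    simp only [Amap, Pi.add_apply, Pi.smul_apply, Prod.fst_add, Prod.snd_add, Prod.smul_fst,
      Prod.smul_snd, smul_eq_mul] <;>
    ring

theorem isBilinearMap_betaForm : IsBilinearMap ℝ (betaForm ε lam) := by
  constructor <;> intros <;>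
    simp only [betaForm, Pi.add_apply, Pi.smul_apply, Prod.fst_add, Prod.snd_add,
      Prod.smul_fst, Prod.smul_snd, smul_eq_mul, Finset.mul_sum, ← Finset.sum_add_distrib] <;>
    exact Finset.sum_congr rfl fun _ _ => by ring

theorem betaForm_swap (v w : HV n) : betaForm ε lam v w = -betaForm ε lam w v := by
  simp only [betaForm, ← Finset.sum_neg_distrib]
  exact Finset.sum_congr rfl fun _ _ => by ring

theorem betaForm_Amap_add_betaForm_Amap (v w : HV n) :
    betaForm ε lam (Amap lam v) w + betaForm ε lam v (Amap lam w) = 0 := by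
  simp only [betaForm, Amap, ← Finset.sum_add_distrib]
  exact Finset.sum_eq_zero fun _ _ => by ring

theorem Gform_eq_two_mul_betaForm (v w : HV n) : Gform ε lam v w = 2 * betaForm ε lam v w := by
  simp only [Gform, betaForm, Finset.mul_sum]
  exact Finset.sum_congr rfl fun _ _ => by ring

end FlatExample

theorem flat_hamiltonian_condition_general (n : ℕ) (ε : Fin n → ℝ)
    (lam : Fin n → ℝ) :
    Differentiable ℝ (fun p : HV n => betaForm ε lam p (Amap lam p)) ∧
    ∀ p : HV n, ∃ D : HV n →L[ℝ] ℝ,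
      (∀ w : HV n, D w = -Gform ε lam (Amap lam p) w) ∧
      HasFDerivAt (fun p : HV n => betaForm ε lam p (Amap lam p)) D p := by
  have hderiv (p : HV n) :=
    ContinuousLinearMap.hasFDerivAt_apply_self_of_skew
      (isBilinearMap_betaForm ε lam).toContinuousBilinearMap
      (isLinearMap_Amap lam).mk'.toContinuousLinearMap
      (betaForm_swap ε lam) (betaForm_Amap_add_betaForm_Amap ε lam) p
  refine ⟨fun p => (hderiv p).differentiableAt, fun p => ⟨_, fun w => ?_, hderiv p⟩⟩
  simp [Gform_eq_two_mul_betaForm]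

/-- the Hamiltonian condition `d(β(X)) = −X ⌟ G` in the flat example. -/
theorem flat_hamiltonian_condition (n : ℕ) (ε : Fin n → ℝ)
    (hε : ∀ i, ε i = 1 ∨ ε i = -1) (lam : Fin n → ℝ) :
    Differentiable ℝ (fun p : HV n => betaForm ε lam p (Amap lam p)) ∧
    ∀ p : HV n, ∃ D : HV n →L[ℝ] ℝ,
      (∀ w : HV n, D w = -Gform ε lam (Amap lam p) w) ∧
      HasFDerivAt (fun p : HV n => betaForm ε lam p (Amap lam p)) D p :=
  flat_hamiltonian_condition_general n ε lam
end
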